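/- Fix K, σ, τ > 0 and y > 0, let Φ be the standard normal cumulative distribution function, and for S > 0 set d1(S) = (ln(S/K) + (σ²/2)τ)/(σ√τ), d2(S) = d1(S) − σ√τ and β(S) = y·(S − K)/(S·Φ(d1(S)) − K·Φ(d2(S))). Then β is strictly increasing on (0, ∞): for 0 < S₁ < S₂ one has β(S₁) < β(S₂). -/

import Mathlib

/-!
Write `s = σ√τ` for the total volatility, so that `d₁ = (log (S/K) + s²/2)/s` and `d₂ = d₁ - s`.
The Gaussian density `φ` satisfies `S φ(d₁) = K φ(d₂)`, which makes the delta of the call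
`V' = Φ(d₁)`. Since `V → 0` as `S → 0⁺` and `V` is increasing, `V > 0`; the quotient rule then gives
`((S - K)/V)' = (V - (S - K) Φ(d₁))/V² = K (Φ(d₁) - Φ(d₂))/V² > 0`.
-/

open Real Filter

/-- The cumulative distribution function of the standard normal distribution
(Gaussian measure on ℝ with mean 0 and variance 1). -/
noncomputable def Φ (x : ℝ) : ℝ :=
  (ProbabilityTheory.gaussianReal 0 1 (Set.Iic x)).toReal

open Topology MeasureTheory ProbabilityTheory Set

local notation "φ" => gaussianPDFReal 0 1

lemma StrictMonoOn.lt_of_tendsto_nhdsGT {f : ℝ → ℝ} {a b x : ℝ} (hf : StrictMonoOn f (Ioi a))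
    (hlim : Tendsto f (𝓝[>] a) (𝓝 b)) (hx : a < x) : b < f x := by
  obtain ⟨m, ham, hmx⟩ := exists_between hx
  have hbm : b ≤ f m := by
    refine le_of_tendsto hlim ?_
    filter_upwards [Ioo_mem_nhdsGT ham] with u hu
    exact (hf hu.1 ham hu.2).le
  exact hbm.trans_lt (hf ham (ham.trans hmx) hmx)

lemma strictMonoOn_Ioi_of_hasDerivAt_pos {f f' : ℝ → ℝ} {a : ℝ}
    (hf : ∀ x, a < x → HasDerivAt f (f' x) x) (hf' : ∀ x, a < x → 0 < f' x) :
    StrictMonoOn f (Ioi a) := by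
  refine strictMonoOn_of_deriv_pos (convex_Ioi a)
    (fun x hx => (hf x hx).continuousAt.continuousWithinAt) fun x hx => ?_
  rw [interior_Ioi] at hx
  rw [(hf x hx).deriv]
  exact hf' x hx

lemma Φ_eq_cdf : Φ = cdf (gaussianReal 0 1) := by
  ext x
  rw [cdf_eq_real, measureReal_def, Φ]

lemma Φ_nonneg (x : ℝ) : 0 ≤ Φ x := ENNReal.toReal_nonneg

lemma tendsto_Φ_atBot : Tendsto Φ atBot (𝓝 0) := Φ_eq_cdf ▸ tendsto_cdf_atBot _

lemma Φ_eq_integral (x : ℝ) : Φ x = ∫ t in Iic x, φ t := by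
  rw [Φ, gaussianReal_apply_eq_integral 0 one_ne_zero,
    ENNReal.toReal_ofReal (integral_nonneg fun t => gaussianPDFReal_nonneg 0 1 t)]

lemma continuous_gaussianPDFReal_zero_one : Continuous φ := by
  rw [gaussianPDFReal_def]
  fun_prop

lemma hasDerivAt_Φ (x : ℝ) : HasDerivAt Φ (φ x) x := by
  have hint := integrable_gaussianPDFReal 0 1
  have hΦ : Φ = fun u => Φ 0 + ∫ t in (0 : ℝ)..u, φ t := by
    ext u
    rw [Φ_eq_integral, Φ_eq_integral,
      ← intervalIntegral.integral_Iic_sub_Iic hint.integrableOn hint.integrableOn]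
    ring
  rw [hΦ]
  exact (intervalIntegral.integral_hasDerivAt_right hint.intervalIntegrable
    continuous_gaussianPDFReal_zero_one.stronglyMeasurable.stronglyMeasurableAtFilter
    continuous_gaussianPDFReal_zero_one.continuousAt).const_add _

lemma strictMono_Φ : StrictMono Φ :=
  strictMono_of_hasDerivAt_pos hasDerivAt_Φ fun x => gaussianPDFReal_pos 0 1 x one_ne_zero

lemma Φ_pos (x : ℝ) : 0 < Φ x :=
  (Φ_nonneg (x - 1)).trans_lt (strictMono_Φ (by linarith))

lemma gaussianPDFReal_zero_one_sub (x s : ℝ) :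
    φ (x - s) = φ x * exp (s * x - s ^ 2 / 2) := by
  simp only [gaussianPDFReal, NNReal.coe_one, sub_zero, mul_one, mul_assoc, ← exp_add]
  ring_nf

namespace BlackScholes

noncomputable def d₁ (K s S : ℝ) : ℝ := (log (S / K) + s ^ 2 / 2) / s

noncomputable def call (K s S : ℝ) : ℝ := S * Φ (d₁ K s S) - K * Φ (d₁ K s S - s)

variable {K s S : ℝ}

lemma hasDerivAt_d₁ (hK : K ≠ 0) (hS : S ≠ 0) : HasDerivAt (d₁ K s) (1 / (S * s)) S := by
  have hlog := ((hasDerivAt_id' S).div_const K).log (div_ne_zero hS hK)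
  exact ((hlog.add_const (s ^ 2 / 2)).div_const s).congr_deriv (by field_simp)

lemma tendsto_d₁_nhdsGT_zero (hK : 0 < K) (hs : 0 < s) :
    Tendsto (d₁ K s) (𝓝[>] 0) atBot := by
  have hdiv : Tendsto (fun S => S / K) (𝓝[>] 0) (𝓝[>] 0) := by
    simpa using (continuous_id.div_const K).continuousWithinAt.tendsto_nhdsWithin
      (x := 0) (s := Ioi 0) (t := Ioi 0) fun S (hS : 0 < S) => div_pos hS hK
  exact (tendsto_atBot_add_const_right _ _ (tendsto_log_nhdsGT_zero.comp hdiv)).atBot_div_const hs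

lemma mul_gaussianPDFReal_d₁ (hK : 0 < K) (hs : s ≠ 0) (hS : 0 < S) :
    S * φ (d₁ K s S) = K * φ (d₁ K s S - s) := by
  have hexp : s * d₁ K s S - s ^ 2 / 2 = log (S / K) := by
    rw [d₁]
    field_simp
    ring
  rw [gaussianPDFReal_zero_one_sub, hexp, exp_log (div_pos hS hK), mul_comm S,
    mul_left_comm, mul_div_cancel₀ _ hK.ne']

lemma hasDerivAt_call (hK : 0 < K) (hs : s ≠ 0) (hS : 0 < S) :
    HasDerivAt (call K s) (Φ (d₁ K s S)) S := by
  have hd := hasDerivAt_d₁ (s := s) hK.ne' hS.ne'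
  have hV := ((hasDerivAt_id' S).mul ((hasDerivAt_Φ _).comp S hd)).sub
    (((hasDerivAt_Φ _).comp S (hd.sub_const s)).const_mul K)
  refine hV.congr_deriv ?_
  rw [Function.comp_apply]
  linear_combination (1 / (S * s)) * mul_gaussianPDFReal_d₁ hK hs hS

lemma tendsto_call_nhdsGT_zero (hK : 0 < K) (hs : 0 < s) :
    Tendsto (call K s) (𝓝[>] 0) (𝓝 0) := by
  have hd := tendsto_d₁_nhdsGT_zero hK hs
  have hS : Tendsto (fun S : ℝ => S) (𝓝[>] 0) (𝓝 0) := nhdsWithin_le_nhds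
  have hd₂ : Tendsto (fun S => d₁ K s S - s) (𝓝[>] 0) atBot := by
    simpa [← sub_eq_add_neg] using tendsto_atBot_add_const_right _ (-s) hd
  have h := (hS.mul (tendsto_Φ_atBot.comp hd)).sub ((tendsto_Φ_atBot.comp hd₂).const_mul K)
  rw [zero_mul, mul_zero, sub_zero] at h
  exact h

lemma strictMonoOn_call (hK : 0 < K) (hs : s ≠ 0) : StrictMonoOn (call K s) (Ioi 0) :=
  strictMonoOn_Ioi_of_hasDerivAt_pos (fun _ hS => hasDerivAt_call hK hs hS) fun _ _ => Φ_pos _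

lemma call_pos (hK : 0 < K) (hs : 0 < s) (hS : 0 < S) : 0 < call K s S :=
  (strictMonoOn_call hK hs.ne').lt_of_tendsto_nhdsGT (tendsto_call_nhdsGT_zero hK hs) hS

lemma strictMonoOn_sub_div_call (hK : 0 < K) (hs : 0 < s) :
    StrictMonoOn (fun S => (S - K) / call K s S) (Ioi 0) := by
  refine strictMonoOn_Ioi_of_hasDerivAt_pos (fun S hS =>
    (((hasDerivAt_id' S).sub_const K).div (hasDerivAt_call hK hs.ne' hS)
      (call_pos hK hs hS).ne')) fun S hS => ?_
  have hnum : 1 * call K s S - (S - K) * Φ (d₁ K s S)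
      = K * (Φ (d₁ K s S) - Φ (d₁ K s S - s)) := by
    rw [call]
    ring
  have hΦ : Φ (d₁ K s S - s) < Φ (d₁ K s S) := strictMono_Φ (by linarith)
  rw [hnum]
  exact div_pos (mul_pos hK (sub_pos.2 hΦ)) (pow_pos (call_pos hK hs hS) 2)

end BlackScholes

/-- The call-hedging ratio β(S) = y·(S − K)/V_call(S) is strictly increasing on (0, ∞). -/
theorem beta_strictMono (K σ τ y : ℝ) (hK : 0 < K) (hσ : 0 < σ) (hτ : 0 < τ)
    (hy : 0 < y)
    (d1 d2 β : ℝ → ℝ)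
    (hd1 : ∀ S, d1 S = (Real.log (S / K) + (σ ^ 2 / 2) * τ) / (σ * Real.sqrt τ))
    (hd2 : ∀ S, d2 S = d1 S - σ * Real.sqrt τ)
    (hβ : ∀ S, β S = y * (S - K) / (S * Φ (d1 S) - K * Φ (d2 S))) :
    ∀ S₁ S₂ : ℝ, 0 < S₁ → S₁ < S₂ → β S₁ < β S₂ := by
  set s := σ * Real.sqrt τ
  have hs : 0 < s := mul_pos hσ (Real.sqrt_pos.2 hτ)
  have hd1_eq : ∀ S, d1 S = BlackScholes.d₁ K s S := fun S => by
    rw [hd1, BlackScholes.d₁, mul_pow, Real.sq_sqrt hτ.le]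
    ring
  have hβ_eq : ∀ S, β S = y * ((S - K) / BlackScholes.call K s S) := fun S => by
    rw [hβ, hd2, hd1_eq, BlackScholes.call, mul_div_assoc]
  intro S₁ S₂ hS₁ hS₁₂
  rw [hβ_eq, hβ_eq]
  exact mul_lt_mul_of_pos_left
    (BlackScholes.strictMonoOn_sub_div_call hK hs hS₁ (hS₁.trans hS₁₂) hS₁₂) hy
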